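/- For every n ≥ 1, the QBF KBKF_n is false, i.e., the quantified formula ∃x_1 y_1 ∀a_1 … ∃x_n y_n ∀a_n ∃z_1 … z_n. φ_n evaluates to false, where φ_n is the conjunction of the KBKF_n clauses. -/

import Mathlib

/-! Generic framework for QBFs in prenex CNF. -/

inductive Q
  | ex
  | all
deriving DecidableEq

abbrev Lit (V : Type) := V × Bool
abbrev Clause (V : Type) := Finset (Lit V)
abbrev Cnf (V : Type) := Finset (Clause V)
abbrev QPrefix (V : Type) := List (Q × V)

variable {V : Type} [DecidableEq V]

/-- Negation of a literal. -/
def negLit (l : Lit V) : Lit V := (l.1, !l.2)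

/-- Evaluation of a literal under an assignment. -/
def evalLit (τ : V → Bool) (l : Lit V) : Bool := if l.2 then τ l.1 else !(τ l.1)

/-- An assignment satisfies a clause if some literal evaluates to true. -/
def SatClause (τ : V → Bool) (C : Clause V) : Prop := ∃ l ∈ C, evalLit τ l = true

/-- An assignment satisfies a CNF if it satisfies all clauses. -/
def SatCnf (τ : V → Bool) (φ : Cnf V) : Prop := ∀ C ∈ φ, SatClause τ C

/-- Recursive semantics of a quantifier prefix over a matrix predicate. -/
def QTrue : QPrefix V → (V → Bool) → ((V → Bool) → Prop) → Prop
  | [], τ, M => M τ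
  | (Q.ex, v) :: P, τ, M => ∃ b, QTrue P (Function.update τ v b) M
  | (Q.all, v) :: P, τ, M => ∀ b, QTrue P (Function.update τ v b) M

/-- Truth of a prenex CNF QBF (closed; the default assignment is irrelevant). -/
def QBFTrue (P : QPrefix V) (φ : Cnf V) : Prop :=
  QTrue P (fun _ => false) (fun τ => SatCnf τ φ)

/-- Two variables are in the same quantifier block of a prefix. -/
def SameBlock (P : QPrefix V) (v w : V) : Prop :=
  ∃ i j : ℕ, (∃ q : Q, P[i]? = some (q, v)) ∧ (∃ q : Q, P[j]? = some (q, w)) ∧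
    ∀ (k₁ k₂ : ℕ) (e₁ e₂ : Q × V), min i j ≤ k₁ → k₁ ≤ k₂ → k₂ ≤ max i j →
      P[k₁]? = some e₁ → P[k₂]? = some e₂ → e₁.1 = e₂.1

/-- An admissible literal map for a prefix: a bijection on literals commuting with
negation and moving variables only within their quantifier block. -/
structure Admissible (P : QPrefix V) (σ : Lit V → Lit V) : Prop where
  bij : Function.Bijective σ
  neg : ∀ l, σ (negLit l) = negLit (σ l)
  block : ∀ v w b c, σ (v, b) = (w, c) → v ≠ w → SameBlock P v w

/-- Action of a literal map on a clause. -/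
def mapClause (σ : Lit V → Lit V) (C : Clause V) : Clause V := C.image σ

/-- A (syntactic) symmetry of a QBF: an admissible map sending the clause set to itself. -/
def IsSymmetry (P : QPrefix V) (φ : Cnf V) (σ : Lit V → Lit V) : Prop :=
  Admissible P σ ∧ φ.image (mapClause σ) = φ

def IsExist (P : QPrefix V) (v : V) : Prop := (Q.ex, v) ∈ P
def IsUniv (P : QPrefix V) (v : V) : Prop := (Q.all, v) ∈ P

/-- A clause is a tautology if it contains complementary literals. -/
def Tauto (C : Clause V) : Prop := ∃ l ∈ C, negLit l ∈ C

/-- Rule R of Q-Res: resolution over an existential variable, with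
non-tautological resolvent. -/
def ResStep (P : QPrefix V) (E₁ E₂ E : Clause V) : Prop :=
  ∃ x, IsExist P x ∧ (x, true) ∈ E₁ ∧ (x, false) ∈ E₂ ∧
    E = E₁.erase (x, true) ∪ E₂.erase (x, false) ∧ ¬ Tauto E

/-- Prefix order on variables: `v` occurs strictly before `w`. -/
def LtP (P : QPrefix V) (v w : V) : Prop :=
  ∃ i j : ℕ, i < j ∧ (∃ q : Q, P[i]? = some (q, v)) ∧ (∃ q : Q, P[j]? = some (q, w))

/-- Rule U of Q-Res: universal reduction. -/
def URed (P : QPrefix V) (F₁ F : Clause V) : Prop :=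
  ∃ l, IsUniv P l.1 ∧ l ∈ F₁ ∧ negLit l ∉ F₁ ∧ F = F₁.erase l ∧
    ∀ k ∈ F₁.erase l, IsExist P k.1 → LtP P k.1 l.1

/-- Derivability in Q-Res (rules A, R, U). -/
inductive Derives (P : QPrefix V) (φ : Cnf V) : Clause V → Prop
  | ax {C : Clause V} : C ∈ φ → Derives P φ C
  | res {E₁ E₂ E : Clause V} :
      Derives P φ E₁ → Derives P φ E₂ → ResStep P E₁ E₂ E → Derives P φ E
  | ured {F₁ F : Clause V} : Derives P φ F₁ → URed P F₁ F → Derives P φ F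

/-- Derivability in Q-Res+S (rules A, R, U, S). -/
inductive DerivesS (P : QPrefix V) (φ : Cnf V) : Clause V → Prop
  | ax {C : Clause V} : C ∈ φ → DerivesS P φ C
  | res {E₁ E₂ E : Clause V} :
      DerivesS P φ E₁ → DerivesS P φ E₂ → ResStep P E₁ E₂ E → DerivesS P φ E
  | ured {F₁ F : Clause V} : DerivesS P φ F₁ → URed P F₁ F → DerivesS P φ F
  | sym {C : Clause V} {σ : Lit V → Lit V} :
      DerivesS P φ C → IsSymmetry P φ σ → DerivesS P φ (mapClause σ C)

/-- A clause available at step `i` of a derivation sequence: an input clause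
(axiom rule A, not counted as a step) or an earlier line. -/
def Avail (φ : Cnf V) (D : List (Clause V)) (i : ℕ) (C : Clause V) : Prop :=
  C ∈ φ ∨ ∃ j, ∃ _ : j < i, ∃ hj : j < D.length, D[j]'hj = C

/-- Line `C` at position `i` is justified by rule R or U from available clauses. -/
def StepOK (P : QPrefix V) (φ : Cnf V) (D : List (Clause V)) (i : ℕ) (C : Clause V) : Prop :=
  (∃ E₁ E₂, Avail φ D i E₁ ∧ Avail φ D i E₂ ∧ ResStep P E₁ E₂ C) ∨
  (∃ F₁, Avail φ D i F₁ ∧ URed P F₁ C)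

/-- Line justified by rule R, U or the symmetry rule S. -/
def StepOKS (P : QPrefix V) (φ : Cnf V) (D : List (Clause V)) (i : ℕ) (C : Clause V) : Prop :=
  StepOK P φ D i C ∨
  (∃ F₁ σ, Avail φ D i F₁ ∧ IsSymmetry P φ σ ∧ C = mapClause σ F₁)

/-- A Q-Res refutation, as a sequence of R/U steps ending in the empty clause;
its length is the number of R and U applications. -/
def IsRefutation (P : QPrefix V) (φ : Cnf V) (D : List (Clause V)) : Prop :=
  (∀ i (hi : i < D.length), StepOK P φ D i (D[i]'hi)) ∧ D.getLast? = some (∅ : Clause V)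

/-- A Q-Res+S refutation. -/
def IsRefutationS (P : QPrefix V) (φ : Cnf V) (D : List (Clause V)) : Prop :=
  (∀ i (hi : i < D.length), StepOKS P φ D i (D[i]'hi)) ∧ D.getLast? = some (∅ : Clause V)

/-- A derivation sequence using rules A, R, U: every line is an input clause or
follows from earlier lines by R or U. -/
def IsDerivation (P : QPrefix V) (φ : Cnf V) (D : List (Clause V)) : Prop :=
  ∀ i (hi : i < D.length), (D[i]'hi) ∈ φ ∨
    (∃ j k, ∃ hj : j < i, ∃ hk : k < i,
      ResStep P (D[j]'(Nat.lt_trans hj hi)) (D[k]'(Nat.lt_trans hk hi)) (D[i]'hi)) ∨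
    (∃ j, ∃ hj : j < i, URed P (D[j]'(Nat.lt_trans hj hi)) (D[i]'hi))

/-! The KBKF formula family (variables indexed 1..n). -/

inductive KV
  | x (i : ℕ)
  | y (i : ℕ)
  | a (i : ℕ)
  | z (i : ℕ)
deriving DecidableEq

/-- Prefix ∃x₁y₁∀a₁ … ∃xₙyₙ∀aₙ ∃z₁…zₙ. -/
def kPrefix (n : ℕ) : QPrefix KV :=
  ((List.range n).flatMap
    (fun j => [(Q.ex, KV.x (j+1)), (Q.ex, KV.y (j+1)), (Q.all, KV.a (j+1))])) ++
  (List.range n).map (fun j => (Q.ex, KV.z (j+1)))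

/-- The tail z̄₁ ∨ … ∨ z̄ₙ. -/
def kZneg (n : ℕ) : Clause KV := (Finset.range n).image (fun j => ((KV.z (j+1), false) : Lit KV))

/-- The clauses of KBKF_n. -/
def kbkf (n : ℕ) : Cnf KV :=
  {({(KV.x 1, false), (KV.y 1, false)} : Clause KV)} ∪
  ((Finset.range (n-1)).image (fun j =>
    ({(KV.x (j+1), true), (KV.a (j+1), false), (KV.x (j+2), false), (KV.y (j+2), false)} : Clause KV))) ∪
  ((Finset.range (n-1)).image (fun j =>
    ({(KV.y (j+1), true), (KV.a (j+1), true), (KV.x (j+2), false), (KV.y (j+2), false)} : Clause KV))) ∪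
  {({(KV.x n, true), (KV.a n, false)} : Clause KV) ∪ kZneg n,
   ({(KV.y n, true), (KV.a n, true)} : Clause KV) ∪ kZneg n} ∪
  ((Finset.range n).image (fun j => ({(KV.a (j+1), true), (KV.z (j+1), true)} : Clause KV))) ∪
  ((Finset.range n).image (fun j => ({(KV.a (j+1), false), (KV.z (j+1), true)} : Clause KV)))

/-- The symmetry σᵢ = (xᵢ yᵢ)(x̄ᵢ ȳᵢ)(aᵢ āᵢ) of KBKF_n. -/
def kSigma (i : ℕ) : Lit KV → Lit KV
  | (KV.x j, b) => if j = i then (KV.y j, b) else (KV.x j, b)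
  | (KV.y j, b) => if j = i then (KV.x j, b) else (KV.y j, b)
  | (KV.a j, b) => if j = i then (KV.a j, !b) else (KV.a j, b)
  | (KV.z j, b) => (KV.z j, b)

/-- The symmetry breaker ψₙ = (x̄₁∨y₁) ∧ … ∧ (x̄ₙ∨yₙ) for KBKF_n. -/
def kPsi (n : ℕ) : Cnf KV :=
  (Finset.range n).image (fun j => ({(KV.x (j+1), false), (KV.y (j+1), true)} : Clause KV))

/-! The QUPARITY formula family. -/

inductive PV
  | x (i : ℕ)
  | a (i : ℕ)
  | y (i : ℕ)
deriving DecidableEq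

/-- Prefix ∃x₁…xₙ ∀a₁a₂ ∃y₂…yₙ. -/
def pPrefix (n : ℕ) : QPrefix PV :=
  (List.range n).map (fun j => ((Q.ex, PV.x (j+1)) : Q × PV)) ++
  [(Q.all, PV.a 1), (Q.all, PV.a 2)] ++
  (List.range (n-1)).map (fun k => ((Q.ex, PV.y (k+2)) : Q × PV))

/-- a₁ ∨ a₂ with sign `s` (s = true: unprimed clauses, s = false: primed clauses). -/
def pAA (s : Bool) : Clause PV := {(PV.a 1, s), (PV.a 2, s)}

/-- The clauses of QUPARITY_n. -/
def quparity (n : ℕ) : Cnf PV :=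
  ((Finset.univ : Finset Bool).biUnion (fun s =>
    ({({(PV.x 1, false), (PV.x 2, false), (PV.y 2, false)} : Clause PV) ∪ pAA s,
      ({(PV.x 1, false), (PV.x 2, true), (PV.y 2, true)} : Clause PV) ∪ pAA s,
      ({(PV.x 1, true), (PV.x 2, false), (PV.y 2, true)} : Clause PV) ∪ pAA s,
      ({(PV.x 1, true), (PV.x 2, true), (PV.y 2, false)} : Clause PV) ∪ pAA s} : Cnf PV) ∪
    ((Finset.range (n-2)).biUnion (fun k =>
      ({({(PV.y (k+2), false), (PV.x (k+3), false), (PV.y (k+3), false)} : Clause PV) ∪ pAA s,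
        ({(PV.y (k+2), false), (PV.x (k+3), true), (PV.y (k+3), true)} : Clause PV) ∪ pAA s,
        ({(PV.y (k+2), true), (PV.x (k+3), false), (PV.y (k+3), true)} : Clause PV) ∪ pAA s,
        ({(PV.y (k+2), true), (PV.x (k+3), true), (PV.y (k+3), false)} : Clause PV) ∪ pAA s} : Cnf PV))))) ∪
  {({(PV.a 1, true), (PV.a 2, true), (PV.y n, true)} : Clause PV),
   ({(PV.a 1, false), (PV.a 2, false), (PV.y n, false)} : Clause PV)}

/-- The symmetry σ₁ = (x₁ x₂)(x̄₁ x̄₂) of QUPARITY_n. -/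
def pSigma1 : Lit PV → Lit PV
  | (PV.x 1, b) => (PV.x 2, b)
  | (PV.x 2, b) => (PV.x 1, b)
  | l => l

/-- The symmetry σᵢ = (xᵢ x̄ᵢ)(a₁ ā₁)(a₂ ā₂)(yᵢ ȳᵢ)⋯(yₙ ȳₙ) of QUPARITY_n, 2 ≤ i ≤ n. -/
def pSigma (n i : ℕ) : Lit PV → Lit PV
  | (PV.x j, b) => if j = i then (PV.x j, !b) else (PV.x j, b)
  | (PV.a j, b) => if j = 1 ∨ j = 2 then (PV.a j, !b) else (PV.a j, b)
  | (PV.y j, b) => if i ≤ j ∧ j ≤ n then (PV.y j, !b) else (PV.y j, b)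

/-- The symmetry breaker ψₙ = (x̄₁ ∨ x₂) ∧ x̄₂ ∧ … ∧ x̄ₙ for QUPARITY_n. -/
def pPsi (n : ℕ) : Cnf PV :=
  {({(PV.x 1, false), (PV.x 2, true)} : Clause PV)} ∪
  (Finset.range (n-1)).image (fun k => ({(PV.x (k+2), false)} : Clause PV))

/-! The modified family KBKF'_n with blocking universal variables b_j. -/

inductive KV2
  | x (i : ℕ)
  | b (i : ℕ)
  | y (i : ℕ)
  | a (i : ℕ)
  | z (i : ℕ)
deriving DecidableEq

/-- Prefix ∃x₁∀b₁∃y₁∀a₁ … ∃xₙ∀bₙ∃yₙ∀aₙ ∃z₁…zₙ of KBKF'_n. -/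
def k2Prefix (n : ℕ) : QPrefix KV2 :=
  ((List.range n).flatMap
    (fun j => [(Q.ex, KV2.x (j+1)), (Q.all, KV2.b (j+1)),
               (Q.ex, KV2.y (j+1)), (Q.all, KV2.a (j+1))])) ++
  (List.range n).map (fun j => (Q.ex, KV2.z (j+1)))

/-- The map σᵢ = (xᵢ yᵢ)(x̄ᵢ ȳᵢ)(aᵢ āᵢ) on the literals of KBKF'_n. -/
def k2Sigma (i : ℕ) : Lit KV2 → Lit KV2
  | (KV2.x j, c) => if j = i then (KV2.y j, c) else (KV2.x j, c)
  | (KV2.y j, c) => if j = i then (KV2.x j, c) else (KV2.y j, c)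
  | (KV2.a j, c) => if j = i then (KV2.a j, !c) else (KV2.a j, c)
  | (KV2.b j, c) => (KV2.b j, c)
  | (KV2.z j, c) => (KV2.z j, c)


/-! The universal player wins KBKF_n by answering `aⱼ := ¬xⱼ`. Against this strategy the
clauses `B₂ⱼ₋₁ = aⱼ ∨ zⱼ` and `B₂ⱼ = āⱼ ∨ zⱼ` force every `zⱼ`, so `C₂ₙ` and `C₂ₙ₊₁` reduce
to `xₙ` and `yₙ ∨ x̄ₙ`, forcing `xₙ` and `yₙ` true. Downwards, once `xⱼ₊₁` and `yⱼ₊₁` are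
true the clauses `C₂ⱼ` and `C₂ⱼ₊₁` reduce in the same way to `xⱼ` and `yⱼ ∨ x̄ⱼ`, and
finally `C₁ = x̄₁ ∨ ȳ₁` is violated. -/

theorem QTrue_append (P P' : QPrefix V) (τ : V → Bool) (M : (V → Bool) → Prop) :
    QTrue (P ++ P') τ M ↔ QTrue P τ (fun τ' => QTrue P' τ' M) := by
  induction P generalizing τ with
  | nil => rfl
  | cons e P ih =>
    obtain ⟨_ | _, v⟩ := e <;> simp only [List.cons_append, QTrue, ih]

theorem QTrue.exists_eq_off_vars {P : QPrefix V} {τ : V → Bool} {M : (V → Bool) → Prop}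
    (h : QTrue P τ M) : ∃ τ', (∀ w, w ∉ P.map Prod.snd → τ' w = τ w) ∧ M τ' := by
  induction P generalizing τ with
  | nil => exact ⟨τ, fun _ _ => rfl, h⟩
  | cons e P ih =>
    obtain ⟨q, v⟩ := e
    obtain ⟨b, hb⟩ : ∃ b, QTrue P (Function.update τ v b) M := by
      cases q
      · exact h
      · exact ⟨false, h false⟩
    obtain ⟨τ', hτ', hM⟩ := ih hb
    refine ⟨τ', fun w hw => ?_, hM⟩
    simp only [List.map_cons, List.mem_cons, not_or] at hw
    rw [hτ' w hw.2, Function.update_of_ne hw.1]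

def kBlock (j : ℕ) : QPrefix KV :=
  [(Q.ex, KV.x (j+1)), (Q.ex, KV.y (j+1)), (Q.all, KV.a (j+1))]

theorem kPrefix_eq (n : ℕ) :
    kPrefix n = (List.range n).flatMap kBlock ++ (List.range n).map (fun j => (Q.ex, KV.z (j+1))) :=
  rfl

def OpposesX (m : ℕ) (τ : KV → Bool) : Prop := ∀ k < m, τ (KV.a (k+1)) = !τ (KV.x (k+1))

theorem exists_opposesX_of_QTrue_kBlocks {m : ℕ} {τ : KV → Bool} {M : (KV → Bool) → Prop}
    (h : QTrue ((List.range m).flatMap kBlock) τ M) : ∃ τ', OpposesX m τ' ∧ M τ' := by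
  induction m generalizing M with
  | zero => exact ⟨τ, fun _ hk => absurd hk (Nat.not_lt_zero _), h⟩
  | succ m ih =>
    rw [List.range_succ, List.flatMap_append, List.flatMap_singleton, QTrue_append] at h
    obtain ⟨τ, hτ, bx, b_y, hb⟩ := ih h
    refine ⟨_, fun k hk => ?_, hb (!bx)⟩
    rcases Nat.lt_succ_iff_lt_or_eq.1 hk with hk | rfl
    · simp [hτ k hk, hk.ne]
    · simp

section Matrix

variable {n k : ℕ} {τ : KV → Bool}

theorem mem_kbkf_C_one : ({(KV.x 1, false), (KV.y 1, false)} : Clause KV) ∈ kbkf n := by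
  simp [kbkf]

theorem mem_kbkf_C_even (hk : k + 1 < n) :
    ({(KV.x (k+1), true), (KV.a (k+1), false), (KV.x (k+2), false), (KV.y (k+2), false)} :
      Clause KV) ∈ kbkf n := by
  simp only [kbkf, Finset.mem_union, Finset.mem_image, Finset.mem_range]
  exact Or.inl <| Or.inl <| Or.inl <| Or.inl <| Or.inr ⟨k, by omega, rfl⟩

theorem mem_kbkf_C_odd (hk : k + 1 < n) :
    ({(KV.y (k+1), true), (KV.a (k+1), true), (KV.x (k+2), false), (KV.y (k+2), false)} :
      Clause KV) ∈ kbkf n := by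
  simp only [kbkf, Finset.mem_union, Finset.mem_image, Finset.mem_range]
  exact Or.inl <| Or.inl <| Or.inl <| Or.inr ⟨k, by omega, rfl⟩

theorem mem_kbkf_C_2n : ({(KV.x n, true), (KV.a n, false)} : Clause KV) ∪ kZneg n ∈ kbkf n := by
  simp [kbkf]

theorem mem_kbkf_C_2n_succ :
    ({(KV.y n, true), (KV.a n, true)} : Clause KV) ∪ kZneg n ∈ kbkf n := by
  simp [kbkf]

theorem mem_kbkf_B_odd (hk : k < n) :
    ({(KV.a (k+1), true), (KV.z (k+1), true)} : Clause KV) ∈ kbkf n := by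
  simp only [kbkf, Finset.mem_union, Finset.mem_image, Finset.mem_range]
  exact Or.inl <| Or.inr ⟨k, hk, rfl⟩

theorem mem_kbkf_B_even (hk : k < n) :
    ({(KV.a (k+1), false), (KV.z (k+1), true)} : Clause KV) ∈ kbkf n := by
  simp only [kbkf, Finset.mem_union, Finset.mem_image, Finset.mem_range]
  exact Or.inr ⟨k, hk, rfl⟩

theorem SatClause.of_union_kZneg {C : Clause KV} (h : SatClause τ (C ∪ kZneg n))
    (hz : ∀ j < n, τ (KV.z (j+1)) = true) : SatClause τ C := by
  obtain ⟨l, hl, hτl⟩ := h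
  rcases Finset.mem_union.1 hl with hl | hl
  · exact ⟨l, hl, hτl⟩
  · obtain ⟨j, hj, rfl⟩ := Finset.mem_image.1 hl
    simp [evalLit, hz j (Finset.mem_range.1 hj)] at hτl

theorem SatCnf.kbkf_z (hsat : SatCnf τ (kbkf n)) (hk : k < n) : τ (KV.z (k+1)) = true := by
  have hB₁ := hsat _ (mem_kbkf_B_odd hk)
  have hB₂ := hsat _ (mem_kbkf_B_even hk)
  cases ha : τ (KV.a (k+1)) <;> simp_all [SatClause, evalLit]

theorem SatCnf.kbkf_x_y_last (hsat : SatCnf τ (kbkf (k+1))) (hτ : OpposesX (k+1) τ) :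
    τ (KV.x (k+1)) = true ∧ τ (KV.y (k+1)) = true := by
  have hC₁ := (hsat _ mem_kbkf_C_2n).of_union_kZneg fun _ => hsat.kbkf_z
  have hC₂ := (hsat _ mem_kbkf_C_2n_succ).of_union_kZneg fun _ => hsat.kbkf_z
  have ha := hτ k k.lt_succ_self
  simp_all [SatClause, evalLit]

theorem SatCnf.kbkf_x_y_of_succ (hsat : SatCnf τ (kbkf n)) (hτ : OpposesX n τ) (hk : k + 1 < n)
    (hxy : τ (KV.x (k+2)) = true ∧ τ (KV.y (k+2)) = true) :
    τ (KV.x (k+1)) = true ∧ τ (KV.y (k+1)) = true := by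
  have hC₁ := hsat _ (mem_kbkf_C_even hk)
  have hC₂ := hsat _ (mem_kbkf_C_odd hk)
  have ha := hτ k (by omega)
  simp_all [SatClause, evalLit]

theorem SatCnf.kbkf_x_y {m : ℕ} (hsat : SatCnf τ (kbkf (m+1))) (hτ : OpposesX (m+1) τ)
    (hk : k ≤ m) : τ (KV.x (k+1)) = true ∧ τ (KV.y (k+1)) = true := by
  induction hk using Nat.decreasingInduction with
  | self => exact hsat.kbkf_x_y_last hτ
  | of_succ k hk ih => exact hsat.kbkf_x_y_of_succ hτ (by omega) ih

theorem not_satCnf_kbkf (hn : 1 ≤ n) (hτ : OpposesX n τ) : ¬ SatCnf τ (kbkf n) := by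
  intro hsat
  obtain ⟨m, rfl⟩ := Nat.exists_eq_add_of_le' hn
  obtain ⟨hx, hy⟩ := hsat.kbkf_x_y hτ (Nat.zero_le m)
  have hC := hsat _ mem_kbkf_C_one
  simp [SatClause, evalLit, hx, hy] at hC

end Matrix

/-- KBKF_n is false for every n ≥ 1. -/
theorem kbkf_false : ∀ n : ℕ, 1 ≤ n → ¬ QBFTrue (kPrefix n) (kbkf n) := by
  intro n hn h
  rw [QBFTrue, kPrefix_eq, QTrue_append] at h
  obtain ⟨τ, hτ, hz⟩ := exists_opposesX_of_QTrue_kBlocks h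
  obtain ⟨τ', hτ'τ, hsat⟩ := hz.exists_eq_off_vars
  refine not_satCnf_kbkf hn (fun k hk => ?_) hsat
  rw [hτ'τ _ (by simp), hτ'τ _ (by simp), hτ k hk]
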